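/- Let A be an abelian category with a projective class P that is closed with respect to retracts (any retract of an object of P belongs to P). If P⋆ → A is a P-projective precubical resolution of A ∈ A, then the augmented chain complex N(P⋆) → A is a P-projective resolution of A in the sense of Eilenberg–Moore: every N_n(P⋆) belongs to P, and for every Q ∈ P the sequence ⋯ → Hom(Q, N_n(P⋆)) → ⋯ → Hom(Q, N_0(P⋆)) → Hom(Q, A) → 0 is exact. -/

import Mathlib

/-!
Since the `e_n` are `P`-epimorphic, every compatible family of faces `Q ⟶ X_n` with
`Q ∈ P` has a filler `Q ⟶ X_{n+1}`; filling boxes one dimension at a time gives two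
families of operators.

* Degeneracies `σ_k : X_n ⟶ X_{n+1}` with `σ_k ∂_k^ε = 1` (taking `Q = X_n`). The idempotent
  `(1 - ∂_1^1 σ_1) ⋯ (1 - ∂_n^1 σ_n)` of `X_n` has image `N_n`, so `N_n` is a retract of `X_n`.
* A cone `s` on normalized maps, with `s g ∂_1^0 = g`, all `∂^1`-faces zero and
  `s g ∂_{i+1}^0 = s (g ∂_i^0)`. For a normalized cycle `w`, the face formula gives
  `w - (s w) ∂ = Σ_m ± s (w ∂_m^0)`, a normalized cycle with one more vanishing `∂^0`-face
  than `w`. After `n + 1` such steps all faces vanish, and then `w = (s w) ∂`.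
-/
open CategoryTheory CategoryTheory.Limits
universe v u

/-- A precubical object in a category `C`. `d n i ε : X (n+1) ⟶ X n` is the face
`∂_i^ε` for `1 ≤ i ≤ n+1`; values outside this range are junk. -/
structure Precub (C : Type u) [Category.{v} C] where
  X : ℕ → C
  d : ∀ n : ℕ, ℕ → Bool → (X (n + 1) ⟶ X n)
  dd : ∀ (n i j : ℕ) (α ε : Bool), 1 ≤ i → i < j → j ≤ n + 2 →
    d (n + 1) j ε ≫ d n i α = d (n + 1) i α ≫ d n (j - 1) ε

/-- `f` is `P`-epimorphic. -/
def PEpi {C : Type u} [Category.{v} C] (P : C → Prop) {A B : C} (f : A ⟶ B) : Prop :=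
  ∀ Q : C, P Q → ∀ g : Q ⟶ B, ∃ h : Q ⟶ A, h ≫ f = g

/-- `P` is a projective class. -/
def IsProjectiveClass {C : Type u} [Category.{v} C] (P : C → Prop) : Prop :=
  ∀ A : C, ∃ (Q : C) (e : Q ⟶ A), P Q ∧ PEpi P e

/-- The canonical factorization data of an augmented precubical object `X → A`:
`K 0` is the kernel pair of the augmentation, and `K (n+1)` is the cubical kernel of the
faces `∂_1^0, …, ∂_{n+1}^0, ∂_1^1, …, ∂_{n+1}^1 : X_{n+1} ⟶ X_n`, with
`e n : X_{n+1} ⟶ K n` the canonical morphism. -/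
structure KernelData {C : Type u} [Category.{v} C] (X : Precub C) {A : C}
    (aug : X.X 0 ⟶ A) where
  K : ℕ → C
  k : ∀ n : ℕ, ℕ → Bool → (K n ⟶ X.X n)
  e : ∀ n : ℕ, X.X (n + 1) ⟶ K n
  pair_w : k 0 1 false ≫ aug = k 0 1 true ≫ aug
  pair_univ : ∀ {D : C} (h₀ h₁ : D ⟶ X.X 0), h₀ ≫ aug = h₁ ≫ aug →
    ∃! l : D ⟶ K 0, l ≫ k 0 1 false = h₀ ∧ l ≫ k 0 1 true = h₁
  ck_w : ∀ (n i j : ℕ) (ω α : Bool), 1 ≤ i → i < j → j ≤ n + 2 →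
    k (n + 1) j α ≫ X.d n i ω = k (n + 1) i ω ≫ X.d n (j - 1) α
  ck_univ : ∀ (n : ℕ) {D : C} (h : ℕ → Bool → (D ⟶ X.X (n + 1))),
    (∀ (i j : ℕ) (ω α : Bool), 1 ≤ i → i < j → j ≤ n + 2 →
      h j α ≫ X.d n i ω = h i ω ≫ X.d n (j - 1) α) →
    ∃! l : D ⟶ K (n + 1), ∀ (i : ℕ) (ω : Bool), 1 ≤ i → i ≤ n + 2 →
      l ≫ k (n + 1) i ω = h i ω
  e_k : ∀ (n i : ℕ) (ε : Bool), 1 ≤ i → i ≤ n + 1 → e n ≫ k n i ε = X.d n i ε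

/-- Data exhibiting `K` as the normalized chain complex `N(X)` of a precubical object `X`
in an abelian category: `K_n` is the intersection of the kernels of the faces `∂_i^1`
with differential the (restricted) alternating sum `Σ (-1)^(i+1) ∂_i^0`. -/
structure NormalizedData {C : Type u} [Category.{v} C] [Abelian C] (X : Precub C) where
  K : ChainComplex C ℕ
  ι : ∀ n, K.X n ⟶ X.X n
  ι_mono : ∀ n, Mono (ι n)
  ι_ker : ∀ (n i : ℕ), 1 ≤ i → i ≤ n + 1 → ι (n + 1) ≫ X.d n i true = 0
  ι_lift : ∀ (n : ℕ) {W : C} (g : W ⟶ X.X (n + 1)),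
    (∀ i, 1 ≤ i → i ≤ n + 1 → g ≫ X.d n i true = 0) →
    ∃ l : W ⟶ K.X (n + 1), l ≫ ι (n + 1) = g
  ι_lift₀ : ∀ {W : C} (g : W ⟶ X.X 0), ∃ l : W ⟶ K.X 0, l ≫ ι 0 = g
  diff : ∀ n : ℕ, K.d (n + 1) n ≫ ι n =
    ι (n + 1) ≫ ∑ i ∈ Finset.Icc 1 (n + 1), ((-1 : ℤ) ^ (i + 1)) • X.d n i false

theorem exists_seq_of_exists_succ {α : ℕ → Sort*} (p : ∀ n, α n → Prop)
    (r : ∀ n, α n → α (n + 1) → Prop) (h₀ : ∃ a, p 0 a)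
    (hs : ∀ n a, p n a → ∃ b, p (n + 1) b ∧ r n a b) :
    ∃ f : ∀ n, α n, ∀ n, p n (f n) ∧ r n (f n) (f (n + 1)) := by
  choose a₀ ha₀ using h₀
  choose next hnext hr using hs
  let g : ∀ n, {a : α n // p n a} := fun n =>
    Nat.rec ⟨a₀, ha₀⟩ (fun n a => ⟨next n a.1 a.2, hnext n a.1 a.2⟩) n
  exact ⟨fun n => (g n).1, fun n => ⟨(g n).2, hr n _ (g n).2⟩⟩

namespace Precub

variable {C : Type u} [Category.{v} C]

def CompatibleFaces (X : Precub C) (n : ℕ) {D : C} (c : ℕ → Bool → (D ⟶ X.X (n + 1))) :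
    Prop :=
  ∀ (i j : ℕ) (ω α : Bool), 1 ≤ i → i < j → j ≤ n + 2 →
    c j α ≫ X.d n i ω = c i ω ≫ X.d n (j - 1) α

end Precub

namespace KernelData

variable {C : Type u} [Category.{v} C] {P : C → Prop} {X : Precub C} {A : C}
  {aug : X.X 0 ⟶ A} (KD : KernelData X aug) {Q : C}

theorem exists_filler {n : ℕ} (he : PEpi P (KD.e (n + 1))) (hQ : P Q)
    {c : ℕ → Bool → (Q ⟶ X.X (n + 1))} (hc : X.CompatibleFaces n c) :
    ∃ z : Q ⟶ X.X (n + 2), ∀ i ε, 1 ≤ i → i ≤ n + 2 → z ≫ X.d (n + 1) i ε = c i ε := by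
  obtain ⟨l, hl, -⟩ := KD.ck_univ n c hc
  obtain ⟨z, hz⟩ := he Q hQ l
  refine ⟨z, fun i ε h₁ h₂ => ?_⟩
  rw [← KD.e_k (n + 1) i ε h₁ h₂, ← Category.assoc, hz, hl i ε h₁ h₂]

theorem exists_filler_zero (he : PEpi P (KD.e 0)) (hQ : P Q) {h₀ h₁ : Q ⟶ X.X 0}
    (w : h₀ ≫ aug = h₁ ≫ aug) :
    ∃ z : Q ⟶ X.X 1, z ≫ X.d 0 1 false = h₀ ∧ z ≫ X.d 0 1 true = h₁ := by
  obtain ⟨l, ⟨hl₀, hl₁⟩, -⟩ := KD.pair_univ h₀ h₁ w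
  obtain ⟨z, hz⟩ := he Q hQ l
  refine ⟨z, ?_, ?_⟩
  · rw [← KD.e_k 0 1 false le_rfl le_rfl, ← Category.assoc, hz, hl₀]
  · rw [← KD.e_k 0 1 true le_rfl le_rfl, ← Category.assoc, hz, hl₁]

end KernelData

namespace Precub

variable {C : Type u} [Category.{v} C] {X : Precub C} {n : ℕ}

variable (X) in
def IsDegeneracy (σ : ℕ → (X.X n ⟶ X.X (n + 1))) : Prop :=
  ∀ k ε, 1 ≤ k → k ≤ n + 1 → σ k ≫ X.d n k ε = 𝟙 _

variable (X) in
def degeneracyFaces (σ : ℕ → (X.X n ⟶ X.X (n + 1))) (k i : ℕ) (ε : Bool) :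
    X.X (n + 1) ⟶ X.X (n + 1) :=
  if i < k then X.d n i ε ≫ σ (k - 1) else if i = k then 𝟙 _ else X.d n (i - 1) ε ≫ σ k

variable (X) in
def IsDegeneracyOver (σ : ℕ → (X.X n ⟶ X.X (n + 1))) (σ' : ℕ → (X.X (n + 1) ⟶ X.X (n + 2))) :
    Prop :=
  ∀ k i ε, 1 ≤ k → k ≤ n + 2 → 1 ≤ i → i ≤ n + 2 →
    σ' k ≫ X.d (n + 1) i ε = X.degeneracyFaces σ k i ε

theorem IsDegeneracyOver.isDegeneracy {σ : ℕ → (X.X n ⟶ X.X (n + 1))}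
    {σ' : ℕ → (X.X (n + 1) ⟶ X.X (n + 2))} (h : X.IsDegeneracyOver σ σ') :
    X.IsDegeneracy σ' := fun k ε hk hkn => by
  simpa [degeneracyFaces] using h k k ε hk hkn hk hkn

theorem IsDegeneracy.compatibleFaces_zero {σ : ℕ → (X.X 0 ⟶ X.X 1)} (hσ : X.IsDegeneracy σ)
    {k : ℕ} (hk : 1 ≤ k) (hk₂ : k ≤ 2) : X.CompatibleFaces 0 (X.degeneracyFaces σ k) := by
  intro i j ω α hi hij hj
  obtain rfl : i = 1 := by omega
  obtain rfl : j = 2 := by omega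
  obtain rfl | rfl : k = 1 ∨ k = 2 := by omega
  · simp [degeneracyFaces, hσ 1 ω le_rfl le_rfl]
  · simp [degeneracyFaces, hσ 1 α le_rfl le_rfl]

theorem IsDegeneracyOver.compatibleFaces {σ : ℕ → (X.X n ⟶ X.X (n + 1))}
    {σ' : ℕ → (X.X (n + 1) ⟶ X.X (n + 2))} (h : X.IsDegeneracyOver σ σ') {k : ℕ}
    (hk : 1 ≤ k) (hkn : k ≤ n + 3) : X.CompatibleFaces (n + 1) (X.degeneracyFaces σ' k) := by
  have hid := h.isDegeneracy
  have hlt : ∀ k i ε, i < k → k ≤ n + 2 → 1 ≤ i →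
      σ' k ≫ X.d (n + 1) i ε = X.d n i ε ≫ σ (k - 1) := fun k i ε hik hkn hi => by
    simpa [degeneracyFaces, hik] using h k i ε (by omega) hkn hi (by omega)
  have hgt : ∀ k i ε, k < i → i ≤ n + 2 → 1 ≤ k →
      σ' k ≫ X.d (n + 1) i ε = X.d n (i - 1) ε ≫ σ k := fun k i ε hki hin hk => by
    simpa [degeneracyFaces, show ¬i < k by omega, show i ≠ k by omega] using
      h k i ε hk (by omega) (by omega) hin
  intro i j ω α hi hij hj
  rcases lt_trichotomy j k with hjk | rfl | hkj
  · simp only [degeneracyFaces, if_pos hjk, if_pos (hij.trans hjk), Category.assoc]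
    rw [hlt _ i ω (by omega) (by omega) hi, hlt _ (j - 1) α (by omega) (by omega) (by omega),
      ← Category.assoc, ← Category.assoc, X.dd n i j ω α hi hij (by omega)]
  · simp only [degeneracyFaces, lt_irrefl, if_false, if_true, if_pos hij, Category.id_comp,
      Category.assoc, hid (j - 1) α (by omega) (by omega), Category.comp_id]
  rcases lt_trichotomy i k with hik | rfl | hki
  · simp only [degeneracyFaces, if_neg (show ¬j < k by omega), if_neg (show j ≠ k by omega),
      if_pos hik, Category.assoc]
    rw [hlt k i ω hik (by omega) hi, hgt _ (j - 1) α (by omega) (by omega) (by omega),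
      ← Category.assoc, ← Category.assoc, X.dd n i (j - 1) ω α hi (by omega) (by omega)]
  · simp only [degeneracyFaces, if_neg (show ¬j < i by omega), if_neg (show j ≠ i by omega),
      lt_irrefl, if_false, if_true, Category.id_comp, Category.assoc,
      hid i ω (by omega) (by omega), Category.comp_id]
  · simp only [degeneracyFaces, if_neg (show ¬j < k by omega), if_neg (show j ≠ k by omega),
      if_neg (show ¬i < k by omega), if_neg (show i ≠ k by omega), Category.assoc]
    rw [hgt k i ω hki (by omega) hk, hgt k (j - 1) α (by omega) (by omega) hk,
      ← Category.assoc, ← Category.assoc,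
      X.dd n (i - 1) (j - 1) ω α (by omega) (by omega) (by omega)]

theorem IsDegeneracy.exists_over {P : C → Prop} {A : C} {aug : X.X 0 ⟶ A}
    (KD : KernelData X aug) (he : PEpi P (KD.e (n + 1))) (hX : P (X.X (n + 1)))
    {σ : ℕ → (X.X n ⟶ X.X (n + 1))}
    (hc : ∀ k, 1 ≤ k → k ≤ n + 2 → X.CompatibleFaces n (X.degeneracyFaces σ k)) :
    ∃ σ', X.IsDegeneracyOver σ σ' := by
  choose f hf using fun k (hk : 1 ≤ k) (hkn : k ≤ n + 2) => KD.exists_filler he hX (hc k hk hkn)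
  refine ⟨fun k => if h : 1 ≤ k ∧ k ≤ n + 2 then f k h.1 h.2 else f 1 le_rfl (by omega),
    fun k i ε hk hkn => ?_⟩
  simp only [dif_pos (And.intro hk hkn)]
  exact hf k hk hkn i ε

theorem exists_isDegeneracy_zero {P : C → Prop} {A : C} {aug : X.X 0 ⟶ A}
    (KD : KernelData X aug) (he : PEpi P (KD.e 0)) (hX : P (X.X 0)) :
    ∃ σ : ℕ → (X.X 0 ⟶ X.X 1), X.IsDegeneracy σ := by
  obtain ⟨z, hz₀, hz₁⟩ := KD.exists_filler_zero he hX (h₀ := 𝟙 _) (h₁ := 𝟙 _) rfl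
  refine ⟨fun _ => z, fun k ε hk hkn => ?_⟩
  obtain rfl : k = 1 := by omega
  cases ε
  exacts [hz₀, hz₁]

theorem exists_degeneracy_seq {P : C → Prop} {A : C} {aug : X.X 0 ⟶ A}
    (KD : KernelData X aug) (he : ∀ n, PEpi P (KD.e n)) (hX : ∀ n, P (X.X n)) :
    ∃ σ : ∀ n, ℕ → (X.X n ⟶ X.X (n + 1)),
      ∀ n, X.IsDegeneracy (σ n) ∧ X.IsDegeneracyOver (σ n) (σ (n + 1)) := by
  refine (exists_seq_of_exists_succ
    (fun n (σ : ℕ → (X.X n ⟶ X.X (n + 1))) => X.IsDegeneracy σ ∧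
      ∀ k, 1 ≤ k → k ≤ n + 2 → X.CompatibleFaces n (X.degeneracyFaces σ k))
    (fun _ σ σ' => X.IsDegeneracyOver σ σ') ?_ ?_).imp fun σ hσ n => ⟨(hσ n).1.1, (hσ n).2⟩
  · obtain ⟨σ₀, hσ₀⟩ := exists_isDegeneracy_zero KD (he 0) (hX 0)
    exact ⟨σ₀, hσ₀, fun k hk hk₂ => hσ₀.compatibleFaces_zero hk hk₂⟩
  · rintro n σ ⟨-, hc⟩
    obtain ⟨σ', hσ'⟩ := IsDegeneracy.exists_over KD (he (n + 1)) (hX (n + 1)) hc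
    exact ⟨σ', ⟨hσ'.isDegeneracy, fun k hk hkn => hσ'.compatibleFaces hk hkn⟩, hσ'⟩

section Preadditive

variable [Preadditive C] {A : C} {aug : X.X 0 ⟶ A} {Q : C}

variable (X) in
def normalizer (σ : ℕ → (X.X n ⟶ X.X (n + 1))) : ℕ → (X.X (n + 1) ⟶ X.X (n + 1))
  | 0 => 𝟙 _
  | k + 1 => normalizer σ k ≫ (𝟙 _ - X.d n (k + 1) true ≫ σ (k + 1))

theorem comp_normalizer {σ : ℕ → (X.X n ⟶ X.X (n + 1))} {W : C} {f : W ⟶ X.X (n + 1)}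
    (hf : ∀ j, 1 ≤ j → j ≤ n + 1 → f ≫ X.d n j true = 0) :
    ∀ k ≤ n + 1, f ≫ X.normalizer σ k = f
  | 0, _ => Category.comp_id f
  | k + 1, hk => by
    rw [normalizer, ← Category.assoc, comp_normalizer hf k (by omega), Preadditive.comp_sub,
      Category.comp_id, ← Category.assoc, hf (k + 1) (by omega) hk, zero_comp, sub_zero]

theorem normalizer_comp_face {σ : ℕ → (X.X n ⟶ X.X (n + 1))}
    (hσ : ∀ k, 1 ≤ k → k ≤ n + 1 → σ k ≫ X.d n k true = 𝟙 _)
    (hcomm : ∀ j k, 1 ≤ j → j < k → k ≤ n + 1 →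
      ∃ τ : X.X n ⟶ X.X n, X.d n k true ≫ σ k ≫ X.d n j true = X.d n j true ≫ τ) :
    ∀ k ≤ n + 1, ∀ j, 1 ≤ j → j ≤ k → X.normalizer σ k ≫ X.d n j true = 0
  | 0, _, j, hj, hjk => absurd hj (by omega)
  | k + 1, hk, j, hj, hjk => by
    rw [normalizer, Category.assoc, Preadditive.sub_comp, Category.id_comp, Category.assoc,
      Preadditive.comp_sub]
    rcases eq_or_lt_of_le hjk with rfl | hjk
    · rw [hσ _ hj hk, Category.comp_id, sub_self]
    · obtain ⟨τ, hτ⟩ := hcomm j (k + 1) hj hjk hk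
      rw [hτ, ← Category.assoc, normalizer_comp_face hσ hcomm k (by omega) j hj (by omega),
        zero_comp, sub_zero]

theorem exists_normalizing_endo {P : C → Prop}
    (KD : KernelData X aug) (he : ∀ n, PEpi P (KD.e n)) (hX : ∀ n, P (X.X n)) (n : ℕ) :
    ∃ φ : X.X (n + 1) ⟶ X.X (n + 1), (∀ j, 1 ≤ j → j ≤ n + 1 → φ ≫ X.d n j true = 0) ∧
      ∀ {W : C} (f : W ⟶ X.X (n + 1)), (∀ j, 1 ≤ j → j ≤ n + 1 → f ≫ X.d n j true = 0) →
        f ≫ φ = f := by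
  obtain ⟨σ, hσ⟩ := exists_degeneracy_seq KD he hX
  refine ⟨X.normalizer (σ n) (n + 1), fun j hj hjn => normalizer_comp_face
    (fun k hk hkn => (hσ n).1 k true hk hkn) ?_ (n + 1) le_rfl j hj hjn,
    fun f hf => comp_normalizer hf (n + 1) le_rfl⟩
  intro j k hj hjk hkn
  obtain ⟨m, rfl⟩ : ∃ m, n = m + 1 := ⟨n - 1, by omega⟩
  refine ⟨X.d m (k - 1) true ≫ σ m (k - 1), ?_⟩
  have hface : σ (m + 1) k ≫ X.d (m + 1) j true = X.d m j true ≫ σ m (k - 1) := by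
    simpa [degeneracyFaces, hjk] using (hσ m).2 k j true (by omega) hkn hj (by omega)
  rw [hface, ← Category.assoc, ← Category.assoc, X.dd m j k true true hj hjk (by omega)]

variable (X aug Q) in
/-- At level `0` we take the kernel of the augmentation rather than all of `Q ⟶ X.X 0`:
these are the `0`-cycles of the augmented complex, where the cone construction starts. -/
def normalHoms : ∀ n, AddSubgroup (Q ⟶ X.X n)
  | 0 => (Preadditive.rightComp Q aug).ker
  | n + 1 => ⨅ i ∈ Finset.Icc 1 (n + 1), (Preadditive.rightComp Q (X.d n i true)).ker

variable (X n) in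
def faceSum : X.X (n + 1) ⟶ X.X n :=
  ∑ i ∈ Finset.Icc 1 (n + 1), ((-1 : ℤ) ^ (i + 1)) • X.d n i false

theorem mem_normalHoms_zero {g : Q ⟶ X.X 0} : g ∈ X.normalHoms aug Q 0 ↔ g ≫ aug = 0 :=
  Iff.rfl

theorem mem_normalHoms_succ {g : Q ⟶ X.X (n + 1)} :
    g ∈ X.normalHoms aug Q (n + 1) ↔ ∀ i, 1 ≤ i → i ≤ n + 1 → g ≫ X.d n i true = 0 := by
  simp [normalHoms, AddSubgroup.mem_iInf, and_imp, Preadditive.rightComp]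

theorem comp_face_mem_normalHoms (haug : X.d 0 1 false ≫ aug = X.d 0 1 true ≫ aug)
    {g : Q ⟶ X.X (n + 1)} (hg : g ∈ X.normalHoms aug Q (n + 1)) {j : ℕ}
    (hj₁ : 1 ≤ j) (hj : j ≤ n + 1) : g ≫ X.d n j false ∈ X.normalHoms aug Q n := by
  rw [mem_normalHoms_succ] at hg
  cases n with
  | zero =>
    obtain rfl : j = 1 := by omega
    rw [mem_normalHoms_zero, Category.assoc, haug, ← Category.assoc, hg 1 le_rfl le_rfl,
      zero_comp]
  | succ n =>
    rw [mem_normalHoms_succ]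
    intro i hi₁ hi
    rcases lt_or_ge i j with hij | hji
    · rw [Category.assoc, X.dd n i j true false hi₁ hij (by omega), ← Category.assoc,
        hg i hi₁ (by omega), zero_comp]
    · have hdd := X.dd n j (i + 1) false true hj₁ (by omega) (by omega)
      rw [Nat.add_sub_cancel] at hdd
      rw [Category.assoc, ← hdd, ← Category.assoc, hg (i + 1) (by omega) (by omega), zero_comp]

theorem comp_faceSum (g : Q ⟶ X.X (n + 1)) :
    g ≫ X.faceSum n = ∑ i ∈ Finset.Icc 1 (n + 1), ((-1 : ℤ) ^ (i + 1)) • (g ≫ X.d n i false) := by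
  simp only [faceSum, Preadditive.comp_sum, Preadditive.comp_zsmul]

theorem faceSum_zero : X.faceSum 0 = X.d 0 1 false := by
  simp [faceSum]

/-- The faces `∂_i ∂_j` with `j < i` cancel against those with `j ≥ i` through the
involution `(i, j) ↦ (j, i - 1)`, by the cubical identity. -/
theorem faceSum_comp_faceSum : X.faceSum (n + 1) ≫ X.faceSum n = 0 := by
  simp only [faceSum, Preadditive.sum_comp, Preadditive.comp_sum, Preadditive.zsmul_comp,
    Preadditive.comp_zsmul, Finset.smul_sum, smul_smul]
  rw [← Finset.sum_product']
  refine Finset.sum_involution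
    (fun p _ => if p.1 < p.2 then (p.2 - 1, p.1) else (p.2, p.1 + 1)) ?_ ?_ ?_ ?_
  · rintro ⟨j, i⟩ hp
    simp only [Finset.mem_product, Finset.mem_Icc] at hp
    dsimp only
    split_ifs with h
    · obtain ⟨k, rfl⟩ : ∃ k, i = k + 1 := ⟨i - 1, by omega⟩
      rw [X.dd n j (k + 1) false false hp.1.1 h (by omega), Nat.add_sub_cancel, ← add_smul]
      convert zero_smul ℤ _ using 2
      ring
    · rw [X.dd n i (j + 1) false false hp.2.1 (by omega) (by omega), Nat.add_sub_cancel,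
        ← add_smul]
      convert zero_smul ℤ _ using 2
      ring
  · rintro ⟨j, i⟩ hp -
    dsimp only
    split_ifs with h <;> simp only [ne_eq, Prod.mk.injEq] <;> omega
  · rintro ⟨j, i⟩ hp
    simp only [Finset.mem_product, Finset.mem_Icc] at hp ⊢
    split_ifs <;> omega
  · rintro ⟨j, i⟩ hp
    simp only [Finset.mem_product, Finset.mem_Icc] at hp
    by_cases h : j < i
    · have h' : ¬i - 1 < j := by omega
      simp only [h, h', if_true, if_false, Prod.mk.injEq, true_and]
      omega
    · have h' : i < j + 1 := by omega
      simp [h, h']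


variable (X aug) in
structure IsCone (s : (Q ⟶ X.X n) → (Q ⟶ X.X (n + 1))) : Prop where
  map_zero : s 0 = 0
  mem : ∀ g ∈ X.normalHoms aug Q n, s g ∈ X.normalHoms aug Q (n + 1)
  face_one : ∀ g ∈ X.normalHoms aug Q n, s g ≫ X.d n 1 false = g

variable (X aug) in
def ConeLink (s : (Q ⟶ X.X n) → (Q ⟶ X.X (n + 1)))
    (s' : (Q ⟶ X.X (n + 1)) → (Q ⟶ X.X (n + 2))) : Prop :=
  ∀ g ∈ X.normalHoms aug Q (n + 1), ∀ i, 2 ≤ i → i ≤ n + 2 →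
    s' g ≫ X.d (n + 1) i false = s (g ≫ X.d n (i - 1) false)

variable (X) in
def coneFaces (s : (Q ⟶ X.X n) → (Q ⟶ X.X (n + 1))) (g : Q ⟶ X.X (n + 1)) (i : ℕ) :
    Bool → (Q ⟶ X.X (n + 1))
  | true => 0
  | false => if i = 1 then g else s (g ≫ X.d n (i - 1) false)

theorem compatibleFaces_coneFaces (haug : X.d 0 1 false ≫ aug = X.d 0 1 true ≫ aug)
    {s : (Q ⟶ X.X n) → (Q ⟶ X.X (n + 1))} (hs : IsCone X aug s) {g : Q ⟶ X.X (n + 1)}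
    (hg : g ∈ X.normalHoms aug Q (n + 1))
    (hpair : ∀ i j, 2 ≤ i → i < j → j ≤ n + 2 →
      s (g ≫ X.d n (j - 1) false) ≫ X.d n i false =
        s (g ≫ X.d n (i - 1) false) ≫ X.d n (j - 1) false) :
    X.CompatibleFaces n (X.coneFaces s g) := by
  intro i j ω α hi hij hj
  have hface : ∀ m, 1 ≤ m → m ≤ n + 1 → g ≫ X.d n m false ∈ X.normalHoms aug Q n :=
    fun m hm hmn => comp_face_mem_normalHoms haug hg hm hmn
  have hs_face : ∀ m, 1 ≤ m → m ≤ n + 1 → ∀ l, 1 ≤ l → l ≤ n + 1 →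
      s (g ≫ X.d n m false) ≫ X.d n l true = 0 :=
    fun m hm hmn => mem_normalHoms_succ.1 (hs.mem _ (hface m hm hmn))
  rw [mem_normalHoms_succ] at hg
  cases α <;> cases ω <;> simp only [coneFaces, if_neg (show j ≠ 1 by omega), zero_comp]
  · by_cases hi₁ : i = 1
    · subst hi₁
      rw [if_pos rfl, hs.face_one _ (hface (j - 1) (by omega) (by omega))]
    · rw [if_neg hi₁]
      exact hpair i j (by omega) hij hj
  · exact hs_face _ (by omega) (by omega) i hi (by omega)
  · split_ifs
    · exact (hg _ (by omega) (by omega)).symm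
    · exact (hs_face _ (by omega) (by omega) _ (by omega) (by omega)).symm

theorem IsCone.exists_next {P : C → Prop} (KD : KernelData X aug) (he : PEpi P (KD.e (n + 1)))
    (hQ : P Q) {s : (Q ⟶ X.X n) → (Q ⟶ X.X (n + 1))} (hs : IsCone X aug s)
    (hc : ∀ g ∈ X.normalHoms aug Q (n + 1), X.CompatibleFaces n (X.coneFaces s g)) :
    ∃ s', IsCone X aug s' ∧ ConeLink X aug s s' := by
  have hfill : ∀ g : Q ⟶ X.X (n + 1), ∃ z : Q ⟶ X.X (n + 2),
      (g ∈ X.normalHoms aug Q (n + 1) → ∀ i ε, 1 ≤ i → i ≤ n + 2 →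
        z ≫ X.d (n + 1) i ε = X.coneFaces s g i ε) ∧ (g = 0 → z = 0) := by
    intro g
    by_cases hg₀ : g = 0
    · refine ⟨0, fun _ i ε _ _ => ?_, fun _ => rfl⟩
      subst hg₀
      cases ε <;> simp [coneFaces, hs.map_zero]
    by_cases hg : g ∈ X.normalHoms aug Q (n + 1)
    · obtain ⟨z, hz⟩ := KD.exists_filler he hQ (hc g hg)
      exact ⟨z, fun _ => hz, fun h => absurd h hg₀⟩
    · exact ⟨0, fun h => absurd h hg, fun _ => rfl⟩
  choose s' hs' hs'₀ using hfill
  refine ⟨s', ⟨hs'₀ 0 rfl, fun g hg => ?_, fun g hg => ?_⟩, fun g hg i hi hin => ?_⟩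
  · exact mem_normalHoms_succ.2 fun i hi hin => hs' g hg i true hi (by omega)
  · simpa [coneFaces] using hs' g hg 1 false le_rfl (by omega)
  · simpa [coneFaces, show i ≠ 1 by omega] using hs' g hg i false (by omega) hin

theorem ConeLink.compatibleFaces (haug : X.d 0 1 false ≫ aug = X.d 0 1 true ≫ aug)
    {s : (Q ⟶ X.X n) → (Q ⟶ X.X (n + 1))} {s' : (Q ⟶ X.X (n + 1)) → (Q ⟶ X.X (n + 2))}
    (hl : ConeLink X aug s s') (hs' : IsCone X aug s') :
    ∀ g ∈ X.normalHoms aug Q (n + 2), X.CompatibleFaces (n + 1) (X.coneFaces s' g) := by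
  intro g hg
  refine compatibleFaces_coneFaces haug hs' hg fun i j hi hij hj => ?_
  rw [hl _ (comp_face_mem_normalHoms haug hg (by omega) (by omega)) i hi (by omega),
    hl _ (comp_face_mem_normalHoms haug hg (by omega) (by omega)) (j - 1) (by omega) (by omega),
    Category.assoc, Category.assoc,
    X.dd n (i - 1) (j - 1) false false (by omega) (by omega) (by omega)]

theorem exists_isCone_zero {P : C → Prop} (KD : KernelData X aug) (he : PEpi P (KD.e 0))
    (hQ : P Q) : ∃ s : (Q ⟶ X.X 0) → (Q ⟶ X.X 1), IsCone X aug s := by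
  have hfill : ∀ g : Q ⟶ X.X 0, ∃ z : Q ⟶ X.X 1,
      (g ≫ aug = 0 → z ≫ X.d 0 1 false = g ∧ z ≫ X.d 0 1 true = 0) ∧ (g = 0 → z = 0) := by
    intro g
    by_cases hg₀ : g = 0
    · exact ⟨0, fun _ => by simp [hg₀], fun _ => rfl⟩
    by_cases hg : g ≫ aug = 0
    · obtain ⟨z, hz⟩ := KD.exists_filler_zero he hQ (h₀ := g) (h₁ := 0) (by rw [hg, zero_comp])
      exact ⟨z, fun _ => hz, fun h => absurd h hg₀⟩
    · exact ⟨0, fun h => absurd h hg, fun _ => rfl⟩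
  choose s hs hs₀ using hfill
  refine ⟨s, hs₀ 0 rfl, fun g hg => mem_normalHoms_succ.2 fun i hi hin => ?_,
    fun g hg => (hs g hg).1⟩
  obtain rfl : i = 1 := by omega
  exact (hs g hg).2

theorem exists_cone_seq {P : C → Prop} (haug : X.d 0 1 false ≫ aug = X.d 0 1 true ≫ aug)
    (KD : KernelData X aug) (he : ∀ n, PEpi P (KD.e n)) (hQ : P Q) :
    ∃ s : ∀ n, (Q ⟶ X.X n) → (Q ⟶ X.X (n + 1)),
      ∀ n, IsCone X aug (s n) ∧ ConeLink X aug (s n) (s (n + 1)) := by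
  refine (exists_seq_of_exists_succ
    (fun n (s : (Q ⟶ X.X n) → (Q ⟶ X.X (n + 1))) => IsCone X aug s ∧
      ∀ g ∈ X.normalHoms aug Q (n + 1), X.CompatibleFaces n (X.coneFaces s g))
    (fun _ s s' => ConeLink X aug s s') ?_ ?_).imp fun s hs n => ⟨(hs n).1.1, (hs n).2⟩
  · obtain ⟨s₀, hs₀⟩ := exists_isCone_zero KD (he 0) hQ
    exact ⟨s₀, hs₀, fun g hg => compatibleFaces_coneFaces haug hs₀ hg fun _ _ _ _ _ => by omega⟩
  · rintro n s ⟨hs, hc⟩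
    obtain ⟨s', hs', hl⟩ := hs.exists_next KD (he (n + 1)) hQ hc
    exact ⟨s', ⟨hs', hl.compatibleFaces haug hs'⟩, hl⟩

variable (X) in
def coneDefect (s : (Q ⟶ X.X n) → (Q ⟶ X.X (n + 1))) (v : Q ⟶ X.X (n + 1)) :
    Q ⟶ X.X (n + 1) :=
  ∑ m ∈ Finset.Icc 1 (n + 1), ((-1 : ℤ) ^ (m + 1)) • s (v ≫ X.d n m false)

theorem coneDefect_mem (haug : X.d 0 1 false ≫ aug = X.d 0 1 true ≫ aug)
    {s : (Q ⟶ X.X n) → (Q ⟶ X.X (n + 1))} (hs : IsCone X aug s) {v : Q ⟶ X.X (n + 1)}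
    (hv : v ∈ X.normalHoms aug Q (n + 1)) : X.coneDefect s v ∈ X.normalHoms aug Q (n + 1) :=
  AddSubgroup.sum_mem _ fun _ hm => AddSubgroup.zsmul_mem _
    (hs.mem _ (comp_face_mem_normalHoms haug hv (Finset.mem_Icc.1 hm).1
      (Finset.mem_Icc.1 hm).2)) _

theorem cone_comp_faceSum {s : (Q ⟶ X.X n) → (Q ⟶ X.X (n + 1))}
    {s' : (Q ⟶ X.X (n + 1)) → (Q ⟶ X.X (n + 2))} (hs' : IsCone X aug s')
    (hl : ConeLink X aug s s') {v : Q ⟶ X.X (n + 1)} (hv : v ∈ X.normalHoms aug Q (n + 1)) :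
    s' v ≫ X.faceSum (n + 1) = v - X.coneDefect s v := by
  rw [comp_faceSum, Finset.Icc_eq_cons_Ioc (by omega), Finset.sum_cons, hs'.face_one v hv,
    ← Finset.Icc_add_one_left_eq_Ioc, ← Finset.map_add_right_Icc _ _ 1, Finset.sum_map, coneDefect,
    sub_eq_add_neg, ← Finset.sum_neg_distrib]
  congr 1
  · simp
  refine Finset.sum_congr rfl fun m hm => ?_
  rw [Finset.mem_Icc] at hm
  simp only [addRightEmbedding_apply, hl v hv (m + 1) (by omega) (by omega), Nat.add_sub_cancel,
    pow_succ, mul_neg_one, neg_smul]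

theorem coneDefect_face_one (haug : X.d 0 1 false ≫ aug = X.d 0 1 true ≫ aug)
    {s : (Q ⟶ X.X n) → (Q ⟶ X.X (n + 1))} (hs : IsCone X aug s) {v : Q ⟶ X.X (n + 1)}
    (hv : v ∈ X.normalHoms aug Q (n + 1)) :
    X.coneDefect s v ≫ X.d n 1 false = v ≫ X.faceSum n := by
  rw [coneDefect, Preadditive.sum_comp, comp_faceSum]
  refine Finset.sum_congr rfl fun m hm => ?_
  rw [Finset.mem_Icc] at hm
  rw [Preadditive.zsmul_comp, hs.face_one _ (comp_face_mem_normalHoms haug hv hm.1 hm.2)]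

/-- Each term `s' (v ∂_m)` of the defect has `i`-th face `s (v ∂_m ∂_{i-1})`, and
`v ∂_m ∂_{i-1}` factors through a face `∂_l v` with `l < i`. -/
theorem coneDefect_face_eq_zero (haug : X.d 0 1 false ≫ aug = X.d 0 1 true ≫ aug)
    {s : (Q ⟶ X.X n) → (Q ⟶ X.X (n + 1))} {s' : (Q ⟶ X.X (n + 1)) → (Q ⟶ X.X (n + 2))}
    (hs : s 0 = 0) (hl : ConeLink X aug s s') {v : Q ⟶ X.X (n + 2)}
    (hv : v ∈ X.normalHoms aug Q (n + 2)) {i : ℕ} (hi : 2 ≤ i) (hin : i ≤ n + 2)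
    (hlow : ∀ l, 1 ≤ l → l < i → v ≫ X.d (n + 1) l false = 0) :
    X.coneDefect s' v ≫ X.d (n + 1) i false = 0 := by
  rw [coneDefect, Preadditive.sum_comp]
  refine Finset.sum_eq_zero fun m hm => ?_
  rw [Finset.mem_Icc] at hm
  rw [Preadditive.zsmul_comp, hl _ (comp_face_mem_normalHoms haug hv hm.1 hm.2) i hi hin]
  suffices h : (v ≫ X.d (n + 1) m false) ≫ X.d n (i - 1) false = 0 by rw [h, hs, smul_zero]
  rcases le_or_gt m (i - 1) with hmi | hmi
  · rw [hlow m hm.1 (by omega), zero_comp]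
  · rw [Category.assoc, X.dd n (i - 1) m false false (by omega) hmi (by omega),
      ← Category.assoc, hlow (i - 1) (by omega) (by omega), zero_comp]

theorem exists_normal_comp_faceSum_eq_of_cones
    (haug : X.d 0 1 false ≫ aug = X.d 0 1 true ≫ aug)
    {s : ∀ n, (Q ⟶ X.X n) → (Q ⟶ X.X (n + 1))}
    (hs : ∀ n, IsCone X aug (s n) ∧ ConeLink X aug (s n) (s (n + 1))) {x : Q ⟶ X.X (n + 1)}
    (hx : x ∈ X.normalHoms aug Q (n + 1)) (hcyc : x ≫ X.faceSum n = 0) :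
    ∃ z ∈ X.normalHoms aug Q (n + 2), z ≫ X.faceSum (n + 1) = x := by
  suffices key : ∀ d (w : Q ⟶ X.X (n + 1)), w ∈ X.normalHoms aug Q (n + 1) →
      w ≫ X.faceSum n = 0 → (∀ m, 1 ≤ m → m + d ≤ n + 1 → w ≫ X.d n m false = 0) →
      ∃ z ∈ X.normalHoms aug Q (n + 2), z ≫ X.faceSum (n + 1) = w from
    key (n + 1) x hx hcyc fun _ _ _ => by omega
  intro d
  induction d with
  | zero =>
    intro w hw _ hfaces
    refine ⟨s (n + 1) w, (hs (n + 1)).1.mem w hw, ?_⟩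
    rw [cone_comp_faceSum (hs (n + 1)).1 (hs n).2 hw, coneDefect, sub_eq_self]
    refine Finset.sum_eq_zero fun m hm => ?_
    rw [Finset.mem_Icc] at hm
    rw [hfaces m hm.1 (by omega), (hs n).1.map_zero, smul_zero]
  | succ d ih =>
    intro w hw hcyc hfaces
    have hw' := cone_comp_faceSum (hs (n + 1)).1 (hs n).2 hw
    have hdefect : X.coneDefect (s n) w = w - s (n + 1) w ≫ X.faceSum (n + 1) := by
      rw [hw', sub_sub_cancel]
    obtain ⟨z, hz, hzw⟩ := ih (X.coneDefect (s n) w) (coneDefect_mem haug (hs n).1 hw) (by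
      rw [hdefect, Preadditive.sub_comp, hcyc, Category.assoc, faceSum_comp_faceSum, comp_zero,
        sub_zero]) (by
      intro m hm hmd
      by_cases hm₁ : m = 1
      · rw [hm₁, coneDefect_face_one haug (hs n).1 hw, hcyc]
      obtain ⟨n, rfl⟩ : ∃ k, n = k + 1 := ⟨n - 1, by omega⟩
      exact coneDefect_face_eq_zero haug (hs n).1.map_zero (hs n).2 hw (by omega) (by omega)
        fun l hl hlm => hfaces l hl (by omega))
    refine ⟨s (n + 1) w + z, add_mem ((hs (n + 1)).1.mem w hw) hz, ?_⟩
    rw [Preadditive.add_comp, hw', hzw, sub_add_cancel]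

theorem exists_normal_comp_faceSum_eq {P : C → Prop}
    (haug : X.d 0 1 false ≫ aug = X.d 0 1 true ≫ aug) (KD : KernelData X aug)
    (he : ∀ n, PEpi P (KD.e n)) (hQ : P Q) {x : Q ⟶ X.X (n + 1)}
    (hx : x ∈ X.normalHoms aug Q (n + 1)) (hcyc : x ≫ X.faceSum n = 0) :
    ∃ z ∈ X.normalHoms aug Q (n + 2), z ≫ X.faceSum (n + 1) = x :=
  have ⟨_, hs⟩ := exists_cone_seq haug KD he hQ
  exists_normal_comp_faceSum_eq_of_cones haug hs hx hcyc

theorem exists_normal_comp_faceSum_zero_eq {P : C → Prop} (KD : KernelData X aug)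
    (he : PEpi P (KD.e 0)) (hQ : P Q) {x : Q ⟶ X.X 0} (hx : x ≫ aug = 0) :
    ∃ z ∈ X.normalHoms aug Q 1, z ≫ X.faceSum 0 = x := by
  obtain ⟨z, hz₀, hz₁⟩ := KD.exists_filler_zero he hQ (h₀ := x) (h₁ := 0) (by rw [hx, zero_comp])
  refine ⟨z, mem_normalHoms_succ.2 fun i hi hin => ?_, by rw [faceSum_zero, hz₀]⟩
  obtain rfl : i = 1 := by omega
  exact hz₁

end Preadditive

end Precub

namespace NormalizedData

variable {C : Type u} [Category.{v} C] [Abelian C] {X : Precub C} (ND : NormalizedData X)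

theorem ι_comp_faceSum (n : ℕ) : ND.ι (n + 1) ≫ X.faceSum n = ND.K.d (n + 1) n ≫ ND.ι n :=
  (ND.diff n).symm

theorem comp_ι_mem_normalHoms {A Q : C} (aug : X.X 0 ⟶ A) {n : ℕ} (g : Q ⟶ ND.K.X (n + 1)) :
    g ≫ ND.ι (n + 1) ∈ X.normalHoms aug Q (n + 1) :=
  Precub.mem_normalHoms_succ.2 fun i hi hin => by
    rw [Category.assoc, ND.ι_ker n i hi hin, comp_zero]

theorem exists_comp_d_eq {A Q : C} {aug : X.X 0 ⟶ A} {n : ℕ} (g : Q ⟶ ND.K.X n)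
    {z : Q ⟶ X.X (n + 1)} (hz : z ∈ X.normalHoms aug Q (n + 1))
    (hzg : z ≫ X.faceSum n = g ≫ ND.ι n) :
    ∃ l : Q ⟶ ND.K.X (n + 1), l ≫ ND.K.d (n + 1) n = g := by
  obtain ⟨l, hl⟩ := ND.ι_lift n z (Precub.mem_normalHoms_succ.1 hz)
  have := ND.ι_mono n
  refine ⟨l, (cancel_mono (ND.ι n)).1 ?_⟩
  rw [Category.assoc, ← ι_comp_faceSum, ← Category.assoc, hl, hzg]

theorem exists_retraction {P : C → Prop} {A : C} {aug : X.X 0 ⟶ A} (KD : KernelData X aug)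
    (he : ∀ n, PEpi P (KD.e n)) (hX : ∀ n, P (X.X n)) :
    ∀ n, ∃ r : X.X n ⟶ ND.K.X n, ND.ι n ≫ r = 𝟙 _
  | 0 => by
    obtain ⟨r, hr⟩ := ND.ι_lift₀ (𝟙 _)
    have := ND.ι_mono 0
    exact ⟨r, (cancel_mono (ND.ι 0)).1 (by rw [Category.assoc, hr, Category.comp_id,
      Category.id_comp])⟩
  | n + 1 => by
    obtain ⟨φ, hφ₁, hφ₂⟩ := Precub.exists_normalizing_endo KD he hX n
    obtain ⟨r, hr⟩ := ND.ι_lift n φ hφ₁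
    have := ND.ι_mono (n + 1)
    refine ⟨r, (cancel_mono (ND.ι (n + 1))).1 ?_⟩
    rw [Category.assoc, hr, Category.id_comp, hφ₂ _ fun j hj hjn => ND.ι_ker n j hj hjn]

end NormalizedData

theorem stmt17_general {C : Type u} [Category.{v} C] [Abelian C] (P : C → Prop)
    (hretract : ∀ (Y Z : C) (r : Y ⟶ Z) (σ : Z ⟶ Y), σ ≫ r = 𝟙 Z → P Y → P Z)
    (X : Precub C) {A : C} (aug : X.X 0 ⟶ A)
    (haug : X.d 0 1 false ≫ aug = X.d 0 1 true ≫ aug)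
    (KD : KernelData X aug)
    (hproj : ∀ n, P (X.X n))
    (hexact : PEpi P aug ∧ ∀ n, PEpi P (KD.e n))
    (ND : NormalizedData X) :
    (∀ n, P (ND.K.X n)) ∧
    (ND.K.d 1 0 ≫ ND.ι 0 ≫ aug = 0) ∧
    ∀ Q : C, P Q →
      (∀ g : Q ⟶ A, ∃ l : Q ⟶ ND.K.X 0, l ≫ ND.ι 0 ≫ aug = g) ∧
      (∀ g : Q ⟶ ND.K.X 0, g ≫ ND.ι 0 ≫ aug = 0 →
        ∃ l : Q ⟶ ND.K.X 1, l ≫ ND.K.d 1 0 = g) ∧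
      (∀ (n : ℕ) (g : Q ⟶ ND.K.X (n + 1)), g ≫ ND.K.d (n + 1) n = 0 →
        ∃ l : Q ⟶ ND.K.X (n + 2), l ≫ ND.K.d (n + 2) (n + 1) = g) := by
  obtain ⟨haug_epi, he⟩ := hexact
  refine ⟨fun n => ?_, ?_, fun Q hQ => ⟨fun g => ?_, fun g hg => ?_, fun n g hg => ?_⟩⟩
  · obtain ⟨r, hr⟩ := ND.exists_retraction KD he hproj n
    exact hretract _ _ r (ND.ι n) hr (hproj n)
  · rw [← Category.assoc, ← ND.ι_comp_faceSum, Precub.faceSum_zero, Category.assoc, haug,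
      ← Category.assoc, ND.ι_ker 0 1 le_rfl le_rfl, zero_comp]
  · obtain ⟨h, rfl⟩ := haug_epi Q hQ g
    obtain ⟨l, hl⟩ := ND.ι_lift₀ h
    exact ⟨l, by rw [← Category.assoc, hl]⟩
  · obtain ⟨z, hz, hzg⟩ :=
      Precub.exists_normal_comp_faceSum_zero_eq KD (he 0) hQ (by rwa [Category.assoc])
    exact ND.exists_comp_d_eq g hz hzg
  · obtain ⟨z, hz, hzg⟩ := Precub.exists_normal_comp_faceSum_eq haug KD he hQ
      (ND.comp_ι_mem_normalHoms aug g)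
      (by rw [Category.assoc, ND.ι_comp_faceSum, ← Category.assoc, hg, zero_comp])
    exact ND.exists_comp_d_eq g hz hzg

/-- Data exhibiting `K` as the Moore chain complex `M(X)` of a precubical object `X`
in an abelian category. -/
theorem stmt17 {C : Type u} [Category.{v} C] [Abelian C] (P : C → Prop)
    (hP : IsProjectiveClass P)
    (hretract : ∀ (Y Z : C) (r : Y ⟶ Z) (σ : Z ⟶ Y), σ ≫ r = 𝟙 Z → P Y → P Z)
    (X : Precub C) {A : C} (aug : X.X 0 ⟶ A)
    (haug : X.d 0 1 false ≫ aug = X.d 0 1 true ≫ aug)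
    (KD : KernelData X aug)
    (hproj : ∀ n, P (X.X n))
    (hexact : PEpi P aug ∧ ∀ n, PEpi P (KD.e n))
    (ND : NormalizedData X) :
    (∀ n, P (ND.K.X n)) ∧
    (ND.K.d 1 0 ≫ ND.ι 0 ≫ aug = 0) ∧
    ∀ Q : C, P Q →
      (∀ g : Q ⟶ A, ∃ l : Q ⟶ ND.K.X 0, l ≫ ND.ι 0 ≫ aug = g) ∧
      (∀ g : Q ⟶ ND.K.X 0, g ≫ ND.ι 0 ≫ aug = 0 →
        ∃ l : Q ⟶ ND.K.X 1, l ≫ ND.K.d 1 0 = g) ∧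
      (∀ (n : ℕ) (g : Q ⟶ ND.K.X (n + 1)), g ≫ ND.K.d (n + 1) n = 0 →
        ∃ l : Q ⟶ ND.K.X (n + 2), l ≫ ND.K.d (n + 2) (n + 1) = g) :=
  stmt17_general P hretract X aug haug KD hproj hexact ND
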